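/- arXiv:2003.01093 — 2 statements merged into one kernel-verified Lean document; each statement's English description precedes it below -/
import Mathlib

section
/- Let N ≥ 1, 0 < s < 1 (with s < 1/2 if N = 1), p > (N+2s)/(N-2s), and a > 0. If u : ℝ^N → ℝ is a smooth, positive, radially decreasing function vanishing at infinity that satisfies u(x) = c_{N,s} ∫_{ℝ^N} a u(y)^p / |x-y|^{N-2s} dy for all x, then there is a constant C depending only on N, s, p such that u(x) ≤ C a^{-1/(p-1)} |x|^{-2s/(p-1)} for all x ≠ 0. -/
open MeasureTheory Real Filter Set

noncomputable section

/-- The Riesz kernel normalization constant `c_{N,s} = Γ(N/2-s)/(π^{N/2} 4^s Γ(s))`. -/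
def rieszConst (N : ℕ) (s : ℝ) : ℝ :=
  Real.Gamma ((N : ℝ) / 2 - s) / (Real.pi ^ ((N : ℝ) / 2) * (4 : ℝ) ^ s * Real.Gamma s)

/-- Weak algebraic decay of ground states in the supercritical case: if `u` is a smooth,
positive, radially decreasing function vanishing at infinity satisfying
`u = (-Δ)^{-s}(a u^p)` pointwise (as a Riesz potential), with `p > (N+2s)/(N-2s)`,
then `u(x) ≤ C a^{-1/(p-1)} |x|^{-2s/(p-1)}` for a constant `C = C(N,s,p)`. -/
theorem stmt0 (N : ℕ) (s p : ℝ) (hN : 1 ≤ N) (hs0 : 0 < s) (hs1 : s < 1)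
    (hs2 : N = 1 → s < 1 / 2) (hp : ((N : ℝ) + 2 * s) / ((N : ℝ) - 2 * s) < p) :
    ∃ C > 0, ∀ a : ℝ, 0 < a →
      ∀ u : EuclideanSpace ℝ (Fin N) → ℝ,
        ContDiff ℝ (⊤ : ℕ∞) u →
        (∀ x, 0 < u x) →
        (∀ x y : EuclideanSpace ℝ (Fin N), ‖x‖ ≤ ‖y‖ → u y ≤ u x) →
        Tendsto u (cocompact (EuclideanSpace ℝ (Fin N))) (nhds 0) →
        (∀ x, u x = rieszConst N s *
            ∫ y : EuclideanSpace ℝ (Fin N), a * u y ^ p / ‖x - y‖ ^ ((N : ℝ) - 2 * s)) →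
        ∀ x : EuclideanSpace ℝ (Fin N), x ≠ 0 →
          u x ≤ C * a ^ (-(1 / (p - 1))) * ‖x‖ ^ (-(2 * s / (p - 1))) := by
  have hN2s : 0 < (N : ℝ) - 2 * s := by
    rcases Nat.lt_or_ge N 2 with h | h
    · interval_cases N
      · have := hs2 rfl
        push_cast
        linarith
    · have : (2 : ℝ) ≤ N := by exact_mod_cast h
      linarith
  have hp1 : 1 < p := by
    refine lt_trans ?_ hp
    rw [lt_div_iff₀ hN2s]
    linarith
  have hp0 : 0 < p - 1 := by linarith
  set E := EuclideanSpace ℝ (Fin N)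
  have hNtriv : Nontrivial E :=
    Module.nontrivial_of_finrank_pos (R := ℝ)
      (by rw [finrank_euclideanSpace_fin]; exact hN)
  have hc : 0 < rieszConst N s := by
    unfold rieszConst
    apply div_pos (Real.Gamma_pos_of_pos (by linarith))
    have := Real.Gamma_pos_of_pos hs0
    positivity
  set V : ℝ := (volume (Metric.ball (0 : E) 1)).toReal with hVdef
  have hV : 0 < V := by
    apply ENNReal.toReal_pos
    · exact (Metric.measure_ball_pos volume 0 one_pos).ne'
    · exact measure_ball_lt_top.ne
  set K : ℝ := rieszConst N s * V / 2 ^ ((N : ℝ) - 2 * s) with hKdef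
  have hK : 0 < K := by
    apply div_pos (mul_pos hc hV)
    positivity
  refine ⟨K ^ (-(1 / (p - 1))), Real.rpow_pos_of_pos hK _, ?_⟩
  intro a ha u _hsmooth hupos hmono _hdec heq x hx
  have hr : 0 < ‖x‖ := norm_pos_iff.mpr hx
  set r := ‖x‖ with hrdef
  set f : E → ℝ := fun y => a * u y ^ p / ‖x - y‖ ^ ((N : ℝ) - 2 * s) with hfdef
  have hf0 : ∀ y, 0 ≤ f y := by
    intro y
    apply div_nonneg
    · exact le_of_lt (mul_pos ha (Real.rpow_pos_of_pos (hupos y) p))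
    · exact Real.rpow_nonneg (norm_nonneg _) _
  have hint : Integrable f := by
    by_contra h
    have := heq x
    rw [show (∫ y : E, a * u y ^ p / ‖x - y‖ ^ ((N : ℝ) - 2 * s)) = ∫ y, f y from rfl,
      integral_undef h, mul_zero] at this
    exact absurd this (hupos x).ne'
  -- lower bound on the ball
  set m : ℝ := a * u x ^ p / (2 * r) ^ ((N : ℝ) - 2 * s) with hmdef
  have hlow : ∀ y ∈ Metric.ball (0 : E) r, m ≤ f y := by
    intro y hy
    rw [Metric.mem_ball, dist_zero_right] at hy
    have hxy0 : 0 < ‖x - y‖ := by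
      rw [norm_sub_pos_iff]
      intro hxy; rw [hrdef, hxy] at hy; exact absurd hy (lt_irrefl _)
    have hxy2 : ‖x - y‖ ≤ 2 * r := by
      calc ‖x - y‖ ≤ ‖x‖ + ‖y‖ := norm_sub_le x y
        _ ≤ 2 * r := by rw [hrdef]; linarith
    have huxy : u x ≤ u y := hmono y x hy.le
    apply div_le_div₀ (le_of_lt (mul_pos ha (Real.rpow_pos_of_pos (hupos y) p)))
    · exact mul_le_mul_of_nonneg_left
        (Real.rpow_le_rpow (hupos x).le huxy (by linarith)) ha.le
    · exact Real.rpow_pos_of_pos hxy0 _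
    · exact Real.rpow_le_rpow hxy0.le hxy2 hN2s.le
  have hvol : (volume (Metric.ball (0 : E) r)).toReal = r ^ (N : ℝ) * V := by
    rw [Measure.addHaar_ball _ _ hr.le, ENNReal.toReal_mul, ENNReal.toReal_ofReal (by positivity),
      finrank_euclideanSpace_fin, hVdef, ← Real.rpow_natCast]
  have hball : m * (r ^ (N : ℝ) * V) ≤ ∫ y in Metric.ball (0 : E) r, f y := by
    rw [← hvol]
    exact setIntegral_ge_of_const_le_real measurableSet_ball measure_ball_lt_top.ne hlow
      hint.integrableOn
  have hwhole : (∫ y in Metric.ball (0 : E) r, f y) ≤ ∫ y, f y :=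
    setIntegral_le_integral hint (Filter.Eventually.of_forall hf0)
  have hux : u x = rieszConst N s * ∫ y, f y := heq x
  -- key inequality : K * (a * u x ^ p * r ^ (2*s)) ≤ u x
  have hsplit : (2 * r) ^ ((N : ℝ) - 2 * s) =
      2 ^ ((N : ℝ) - 2 * s) * r ^ ((N : ℝ) - 2 * s) :=
    Real.mul_rpow (by norm_num) hr.le
  have hrsplit : r ^ ((N : ℝ)) = r ^ ((N : ℝ) - 2 * s) * r ^ (2 * s) := by
    rw [← Real.rpow_add hr]; ring_nf
  have hkey : K * (a * u x ^ p * r ^ (2 * s)) ≤ u x := by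
    have h1 : m * (r ^ (N : ℝ) * V) ≤ ∫ y, f y := le_trans hball hwhole
    have h2 : rieszConst N s * (m * (r ^ (N : ℝ) * V)) ≤ u x := by
      rw [hux]; exact mul_le_mul_of_nonneg_left h1 hc.le
    refine le_trans (le_of_eq ?_) h2
    rw [hmdef, hKdef, hsplit, hrsplit]
    have h2pos : (0:ℝ) < 2 ^ ((N : ℝ) - 2 * s) := by positivity
    have hrpos : (0:ℝ) < r ^ ((N : ℝ) - 2 * s) := Real.rpow_pos_of_pos hr _
    field_simp
  -- conclude
  set t := u x with htdef
  have ht : 0 < t := hupos x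
  have htp : t ^ p = t * t ^ (p - 1) := by
    nth_rewrite 1 [show p = 1 + (p - 1) by ring]
    rw [Real.rpow_add ht, Real.rpow_one]
  have hfin : K * a * r ^ (2 * s) * t ^ (p - 1) ≤ 1 := by
    have := hkey
    rw [htp] at this
    have ht' : K * a * r ^ (2 * s) * t ^ (p - 1) * t ≤ 1 * t := by
      rw [one_mul]; nlinarith [this]
    exact le_of_mul_le_mul_right ht' ht
  have hbase : 0 < K * a * r ^ (2 * s) := by positivity
  have htle : t ^ (p - 1) ≤ (K * a * r ^ (2 * s))⁻¹ := by
    rw [← one_div, le_div_iff₀ hbase, mul_comm]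
    exact hfin
  have := Real.rpow_le_rpow (Real.rpow_nonneg ht.le _) htle (by positivity : (0:ℝ) ≤ 1 / (p - 1))
  rw [← Real.rpow_mul ht.le, mul_one_div, div_self hp0.ne', Real.rpow_one] at this
  refine le_trans this (le_of_eq ?_)
  rw [← Real.rpow_neg_one (K * a * r ^ (2 * s)), ← Real.rpow_mul hbase.le,
    show (-1 : ℝ) * (1 / (p - 1)) = -(1 / (p - 1)) by ring,
    Real.mul_rpow (by positivity) (Real.rpow_nonneg hr.le _),
    Real.mul_rpow hK.le ha.le, ← Real.rpow_mul hr.le,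
    show 2 * s * -(1 / (p - 1)) = -(2 * s / (p - 1)) by ring]
end
end

section
/- Let N ≥ 1, 0 < 2s < N, m > m_c := 2 - 2s/N. Suppose there exists a constant C* (the Hardy-Littlewood-Sobolev constant) such that for all nonnegative ρ ∈ L¹(ℝ^N) ∩ L^{m_c}(ℝ^N), ∬ |x-y|^{2s-N} ρ(x)ρ(y) dx dy ≤ C* ‖ρ‖_{L¹}^{2s/N} ‖ρ‖_{L^{m_c}}^{m_c}. If ρ ∈ Y_M satisfies the virial identity (χ/2)∬ c_{N,s}|x-y|^{2s-N}ρ(x)ρ(y) = (N/(N-2s))∫ρ^m, then ‖ρ‖_{L^m}^m ≤ Q M^{((m-2)N+2sm)/((m-2)N+2s)}, where Q depends only on χ, s, m, N. -/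
/-!
The virial identity makes `∫ ρ^m` a constant multiple of the Riesz energy, which the HLS
inequality bounds by `M^{2s/N} ∫ ρ^{m_c}`. Hölder interpolation between `L¹` and `L^m` gives
`∫ ρ^{m_c} ≤ M^{1-t} (∫ ρ^m)^t` with `m_c = (1-t) + t m`, i.e. `t = (m_c - 1)/(m - 1) ∈ (0,1)`.
Hence `∫ ρ^m ≤ K M^{2s/N + 1 - t} (∫ ρ^m)^t`, and since `t < 1` the power of `∫ ρ^m` can be
absorbed, leaving the exponent `(2s/N + 1 - t)/(1 - t)` of `M`.
-/

open MeasureTheory Real Filter Set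

noncomputable section

/-- The class `Y_M` of nonnegative `L¹ ∩ L^m` densities of mass `M` with zero
center of mass. -/
def Ymass (N : ℕ) (m M : ℝ) : Set (EuclideanSpace ℝ (Fin N) → ℝ) :=
  {ρ | (∀ x, 0 ≤ ρ x) ∧ Integrable ρ ∧ MemLp ρ (ENNReal.ofReal m) ∧
    (∫ x, ρ x) = M ∧ (∫ x : EuclideanSpace ℝ (Fin N), ρ x • x) = 0}

/-- The free energy functional
`F[ρ] = (1/(m-1)) ∫ ρ^m - (χ/2) ∬ c_{N,s} |x-y|^{2s-N} ρ(x) ρ(y)`. -/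
def freeEnergy (N : ℕ) (s m χ : ℝ) (ρ : EuclideanSpace ℝ (Fin N) → ℝ) : ℝ :=
  1 / (m - 1) * (∫ x, ρ x ^ m) -
    χ / 2 * ∫ x : EuclideanSpace ℝ (Fin N), ∫ y : EuclideanSpace ℝ (Fin N),
      rieszConst N s * ‖x - y‖ ^ (2 * s - (N : ℝ)) * ρ x * ρ y

open scoped ENNReal

section Interpolation

variable {α : Type*} [MeasurableSpace α] {μ : Measure α}

lemma lintegral_rpow_interpolate_le {f : α → ℝ≥0∞} (hf : AEMeasurable f μ) {p t : ℝ}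
    (hp : 0 ≤ p) (ht₀ : 0 ≤ t) (ht₁ : t ≤ 1) :
    ∫⁻ a, f a ^ (1 - t + t * p) ∂μ ≤ (∫⁻ a, f a ∂μ) ^ (1 - t) * (∫⁻ a, f a ^ p ∂μ) ^ t :=
  calc ∫⁻ a, f a ^ (1 - t + t * p) ∂μ = ∫⁻ a, f a ^ (1 - t) * (f a ^ p) ^ t ∂μ := by
        refine lintegral_congr fun a => ?_
        rw [← ENNReal.rpow_mul, ENNReal.rpow_add_of_nonneg _ _ (by linarith) (by positivity),
          mul_comm p]
    _ ≤ _ := ENNReal.lintegral_mul_norm_pow_le hf (hf.pow_const p) (by linarith) ht₀ (by ring)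

lemma memLp_ofReal_iff_lintegral_rpow_lt_top {E : Type*} [NormedAddCommGroup E] {f : α → E}
    (hf : AEStronglyMeasurable f μ) {q : ℝ} (hq : 0 < q) :
    MemLp f (ENNReal.ofReal q) μ ↔ ∫⁻ a, ‖f a‖ₑ ^ q ∂μ < ∞ := by
  rw [MemLp, eLpNorm_lt_top_iff_lintegral_rpow_enorm_lt_top (by simpa using hq)
    ENNReal.ofReal_ne_top, ENNReal.toReal_ofReal hq.le]
  exact and_iff_right hf

lemma integral_rpow_eq_toReal_lintegral {f : α → ℝ} (hf₀ : 0 ≤ f)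
    (hf : AEStronglyMeasurable f μ) {q : ℝ} (hq : 0 ≤ q) :
    ∫ a, f a ^ q ∂μ = (∫⁻ a, ‖f a‖ₑ ^ q ∂μ).toReal := by
  rw [integral_eq_lintegral_of_nonneg_ae (.of_forall fun a => rpow_nonneg (hf₀ a) q)
    (hf.aemeasurable.pow_const q).aestronglyMeasurable]
  congr 1
  refine lintegral_congr fun a => ?_
  rw [Real.enorm_eq_ofReal (hf₀ a), ENNReal.ofReal_rpow_of_nonneg (hf₀ a) hq]

variable {f : α → ℝ} {p t : ℝ}

lemma one_sub_add_mul_pos (hp : 0 < p) (ht₀ : 0 ≤ t) (ht₁ : t ≤ 1) : 0 < 1 - t + t * p := by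
  nlinarith [mul_nonneg (sub_nonneg.2 ht₁) hp.le, mul_nonneg ht₀ hp.le]

lemma lintegral_interpolate_bound_ne_top (hf₁ : Integrable f μ)
    (hfp : MemLp f (ENNReal.ofReal p) μ) (hp : 0 < p) (ht₀ : 0 ≤ t) (ht₁ : t ≤ 1) :
    (∫⁻ a, ‖f a‖ₑ ∂μ) ^ (1 - t) * (∫⁻ a, ‖f a‖ₑ ^ p ∂μ) ^ t ≠ ∞ :=
  ENNReal.mul_ne_top (ENNReal.rpow_ne_top_of_nonneg (by linarith) hf₁.2.ne)
    (ENNReal.rpow_ne_top_of_nonneg ht₀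
      ((memLp_ofReal_iff_lintegral_rpow_lt_top hf₁.1 hp).1 hfp).ne)

lemma MemLp.of_interpolate (hf₁ : Integrable f μ) (hfp : MemLp f (ENNReal.ofReal p) μ)
    (hp : 0 < p) (ht₀ : 0 ≤ t) (ht₁ : t ≤ 1) :
    MemLp f (ENNReal.ofReal (1 - t + t * p)) μ :=
  (memLp_ofReal_iff_lintegral_rpow_lt_top hf₁.1
    (one_sub_add_mul_pos hp ht₀ ht₁)).2
    ((lintegral_rpow_interpolate_le hf₁.1.enorm hp.le ht₀ ht₁).trans_lt
      (lintegral_interpolate_bound_ne_top hf₁ hfp hp ht₀ ht₁).lt_top)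

lemma integral_rpow_interpolate_le (hf₀ : 0 ≤ f) (hf₁ : Integrable f μ)
    (hfp : MemLp f (ENNReal.ofReal p) μ) (hp : 0 < p) (ht₀ : 0 ≤ t) (ht₁ : t ≤ 1) :
    ∫ a, f a ^ (1 - t + t * p) ∂μ ≤ (∫ a, f a ∂μ) ^ (1 - t) * (∫ a, f a ^ p ∂μ) ^ t := by
  have hf : AEStronglyMeasurable f μ := hf₁.1
  have h₁ : ∫ a, f a ∂μ = (∫⁻ a, ‖f a‖ₑ ∂μ).toReal := by
    simpa using integral_rpow_eq_toReal_lintegral hf₀ hf zero_le_one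
  rw [h₁, integral_rpow_eq_toReal_lintegral hf₀ hf (one_sub_add_mul_pos hp ht₀ ht₁).le,
    integral_rpow_eq_toReal_lintegral hf₀ hf hp.le, ENNReal.toReal_rpow,
    ENNReal.toReal_rpow, ← ENNReal.toReal_mul]
  exact ENNReal.toReal_mono (lintegral_interpolate_bound_ne_top hf₁ hfp hp ht₀ ht₁)
    (lintegral_rpow_interpolate_le hf.enorm hp.le ht₀ ht₁)

end Interpolation

lemma le_rpow_inv_one_sub_of_le_mul_rpow {A K t : ℝ} (hA : 0 ≤ A) (hK : 0 ≤ K) (ht : t < 1)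
    (h : A ≤ K * A ^ t) : A ≤ K ^ (1 - t)⁻¹ := by
  rcases hA.eq_or_lt with rfl | hA
  · positivity
  have h' : A ^ (1 - t) ≤ K := by
    rwa [rpow_sub hA, rpow_one, div_le_iff₀ (rpow_pos_of_pos hA t)]
  calc A = (A ^ (1 - t)) ^ (1 - t)⁻¹ := by
        rw [← rpow_mul hA.le, mul_inv_cancel₀ (by linarith), rpow_one]
    _ ≤ K ^ (1 - t)⁻¹ := by gcongr

lemma le_mul_rpow_of_eq_mul_of_le_mul_rpow {A B I K C M a t : ℝ} (hA : 0 ≤ A) (hI : 0 ≤ I)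
    (hB : 0 ≤ B) (hM : 0 < M) (ht : t < 1) (hAI : A = K * I) (hIB : I ≤ C * M ^ a * B)
    (hBA : B ≤ M ^ (1 - t) * A ^ t) :
    A ≤ (max K 1 * max C 1) ^ (1 - t)⁻¹ * M ^ ((a + (1 - t)) * (1 - t)⁻¹) := by
  have key : A ≤ max K 1 * max C 1 * M ^ (a + (1 - t)) * A ^ t :=
    calc A = K * I := hAI
      _ ≤ max K 1 * (max C 1 * M ^ a * (M ^ (1 - t) * A ^ t)) := by
          gcongr
          · exact le_max_left K 1
          · exact hIB.trans (by gcongr; exact le_max_left C 1)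
      _ = max K 1 * max C 1 * M ^ (a + (1 - t)) * A ^ t := by rw [rpow_add hM]; ring
  calc A ≤ (max K 1 * max C 1 * M ^ (a + (1 - t))) ^ (1 - t)⁻¹ :=
        le_rpow_inv_one_sub_of_le_mul_rpow hA (by positivity) ht key
    _ = (max K 1 * max C 1) ^ (1 - t)⁻¹ * M ^ ((a + (1 - t)) * (1 - t)⁻¹) := by
        rw [mul_rpow (by positivity) (by positivity), ← rpow_mul hM.le]

lemma hls_mass_exponent_eq {N s m : ℝ} (hN : N ≠ 0) (hm₁ : m - 1 ≠ 0)
    (hm : m - (2 - 2 * s / N) ≠ 0) :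
    (2 * s / N + (1 - (1 - 2 * s / N) / (m - 1))) * (1 - (1 - 2 * s / N) / (m - 1))⁻¹ =
      ((m - 2) * N + 2 * s * m) / ((m - 2) * N + 2 * s) := by
  have hden : (m - 2) * N + 2 * s ≠ 0 := by
    contrapose! hm; field_simp; linarith
  field_simp
  ring

lemma integral_integral_rpow_norm_sub_mul_nonneg {E : Type*} [NormedAddCommGroup E]
    [MeasurableSpace E] (μ : Measure E) (r : ℝ) {ρ : E → ℝ} (hρ : 0 ≤ ρ) :
    0 ≤ ∫ x, ∫ y, ‖x - y‖ ^ r * ρ x * ρ y ∂μ ∂μ :=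
  integral_nonneg fun x => integral_nonneg fun y =>
    mul_nonneg (mul_nonneg (rpow_nonneg (norm_nonneg _) r) (hρ x)) (hρ y)

lemma integral_rpow_eq_of_virial {N : ℕ} {s m χ : ℝ} (hN : 0 < (N : ℝ)) (hsN : 2 * s < N)
    {ρ : EuclideanSpace ℝ (Fin N) → ℝ}
    (hvir : χ / 2 * (∫ x : EuclideanSpace ℝ (Fin N), ∫ y : EuclideanSpace ℝ (Fin N),
          rieszConst N s * ‖x - y‖ ^ (2 * s - (N : ℝ)) * ρ x * ρ y)
        = (N : ℝ) / ((N : ℝ) - 2 * s) * (∫ x, ρ x ^ m)) :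
    ∫ x, ρ x ^ m = ((N : ℝ) - 2 * s) / N * (χ / 2 * rieszConst N s) *
      ∫ x : EuclideanSpace ℝ (Fin N), ∫ y : EuclideanSpace ℝ (Fin N),
        ‖x - y‖ ^ (2 * s - (N : ℝ)) * ρ x * ρ y := by
  simp_rw [mul_assoc, integral_const_mul, ← mul_assoc] at hvir
  field_simp [show (N : ℝ) - 2 * s ≠ 0 by linarith] at hvir ⊢
  linarith

theorem stmt6_general (N : ℕ) (s m χ : ℝ) (hN : 1 ≤ N) (hsN : 2 * s < N)
    (hm : 2 - 2 * s / N < m)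
    (Cstar : ℝ)
    (hHLS : ∀ ρ : EuclideanSpace ℝ (Fin N) → ℝ, (∀ x, 0 ≤ ρ x) → Integrable ρ →
      MemLp ρ (ENNReal.ofReal (2 - 2 * s / N)) →
      (∫ x : EuclideanSpace ℝ (Fin N), ∫ y : EuclideanSpace ℝ (Fin N),
          ‖x - y‖ ^ (2 * s - (N : ℝ)) * ρ x * ρ y)
        ≤ Cstar * (∫ x, ρ x) ^ (2 * s / N) * ∫ x, ρ x ^ (2 - 2 * s / N)) :
    ∃ Q > 0, ∀ M > 0, ∀ ρ ∈ Ymass N m M,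
      χ / 2 * (∫ x : EuclideanSpace ℝ (Fin N), ∫ y : EuclideanSpace ℝ (Fin N),
          rieszConst N s * ‖x - y‖ ^ (2 * s - (N : ℝ)) * ρ x * ρ y)
        = (N : ℝ) / ((N : ℝ) - 2 * s) * (∫ x, ρ x ^ m) →
      (∫ x, ρ x ^ m)
        ≤ Q * M ^ (((m - 2) * (N : ℝ) + 2 * s * m) / ((m - 2) * (N : ℝ) + 2 * s)) := by
  have hN₀ : (0 : ℝ) < N := by exact_mod_cast hN
  have hmc : 1 < 2 - 2 * s / N := by linarith [(div_lt_one hN₀).2 hsN]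
  have hm₁ : m - 1 ≠ 0 := by linarith
  set t := (1 - 2 * s / N) / (m - 1) with ht
  have ht₀ : 0 < t := div_pos (by linarith) (by linarith)
  have ht₁ : t < 1 := (div_lt_one (by linarith)).2 (by linarith)
  have hmc_eq : 1 - t + t * m = 2 - 2 * s / N := by
    rw [ht]; field_simp; ring
  refine ⟨(max (((N : ℝ) - 2 * s) / N * (χ / 2 * rieszConst N s)) 1 * max Cstar 1) ^ (1 - t)⁻¹,
    by positivity, ?_⟩
  rintro M hM ρ ⟨hρ₀, hρ₁, hρm, hρM, -⟩ hvir
  have hρmc : MemLp ρ (ENNReal.ofReal (2 - 2 * s / N)) :=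
    hmc_eq ▸ MemLp.of_interpolate hρ₁ hρm (by linarith) ht₀.le ht₁.le
  have hinterp : ∫ x, ρ x ^ (2 - 2 * s / N) ≤ M ^ (1 - t) * (∫ x, ρ x ^ m) ^ t := by
    rw [← hmc_eq, ← hρM]
    exact integral_rpow_interpolate_le hρ₀ hρ₁ hρm (by linarith) ht₀.le ht₁.le
  rw [← hls_mass_exponent_eq hN₀.ne' hm₁ (by linarith)]
  exact le_mul_rpow_of_eq_mul_of_le_mul_rpow (integral_nonneg fun x => rpow_nonneg (hρ₀ x) m)
    (integral_integral_rpow_norm_sub_mul_nonneg volume _ hρ₀)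
    (integral_nonneg fun x => rpow_nonneg (hρ₀ x) _) hM ht₁
    (integral_rpow_eq_of_virial hN₀ hsN hvir) (hρM ▸ hHLS ρ hρ₀ hρ₁ hρmc) hinterp

/-- Basic estimate: under the Hardy–Littlewood–Sobolev inequality with constant `C*`,
any `ρ ∈ Y_M` satisfying the virial identity obeys
`‖ρ‖_{L^m}^m ≤ Q M^{((m-2)N+2sm)/((m-2)N+2s)}` with `Q = Q(χ,s,m,N)`. -/
theorem stmt6 (N : ℕ) (s m χ : ℝ) (hN : 1 ≤ N) (hs0 : 0 < s) (hsN : 2 * s < N)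
    (hm : 2 - 2 * s / N < m) (hχ : 0 < χ)
    (Cstar : ℝ)
    (hHLS : ∀ ρ : EuclideanSpace ℝ (Fin N) → ℝ, (∀ x, 0 ≤ ρ x) → Integrable ρ →
      MemLp ρ (ENNReal.ofReal (2 - 2 * s / N)) →
      (∫ x : EuclideanSpace ℝ (Fin N), ∫ y : EuclideanSpace ℝ (Fin N),
          ‖x - y‖ ^ (2 * s - (N : ℝ)) * ρ x * ρ y)
        ≤ Cstar * (∫ x, ρ x) ^ (2 * s / N) * ∫ x, ρ x ^ (2 - 2 * s / N)) :
    ∃ Q > 0, ∀ M > 0, ∀ ρ ∈ Ymass N m M,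
      χ / 2 * (∫ x : EuclideanSpace ℝ (Fin N), ∫ y : EuclideanSpace ℝ (Fin N),
          rieszConst N s * ‖x - y‖ ^ (2 * s - (N : ℝ)) * ρ x * ρ y)
        = (N : ℝ) / ((N : ℝ) - 2 * s) * (∫ x, ρ x ^ m) →
      (∫ x, ρ x ^ m)
        ≤ Q * M ^ (((m - 2) * (N : ℝ) + 2 * s * m) / ((m - 2) * (N : ℝ) + 2 * s)) :=
  stmt6_general N s m χ hN hsN hm Cstar hHLS
end
end
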